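/- Let G be a finite group with trivial center and let a ∈ G. Then a ∈ A_G(a), the set A_G(a) is contained in the center of the centralizer C_G(a) of a in G, and the order of the element a divides the cardinality of A_G(a). -/

import Mathlib

/-- A subrack of a group `G` is a subset closed under conjugation from within. -/
def IsSubrack {G : Type*} [Group G] (S : Set G) : Prop :=
  ∀ a ∈ S, ∀ b ∈ S, a * b * a⁻¹ ∈ S

/-- The subrack of `G` generated by a subset `T`: the smallest subrack containing `T`. -/
def subrackClosure {G : Type*} [Group G] (T : Set G) : Set G :=
  ⋂₀ {S : Set G | IsSubrack S ∧ T ⊆ S}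

/-- The conjugacy class of `a` in `G`. -/
def conjClass {G : Type*} [Group G] (a : G) : Set G :=
  {x : G | ∃ g : G, g * a * g⁻¹ = x}

/-- `B_G(a, g) = ⟨{a, g}⟩_rk ∩ K_G(g)`. -/
def subrackB {G : Type*} [Group G] (a g : G) : Set G :=
  subrackClosure {a, g} ∩ conjClass g

/-- The relation `∼ₐ` whose equivalence classes form the hypothetical pseudo cycle
form of `a`: `g ∼ₐ h` iff `g` and `h` lie in exactly the same sets `B_G(a, y)`. -/
def pseudoRel {G : Type*} [Group G] (a : G) (g h : G) : Prop :=
  ∀ y : G, g ∈ subrackB a y ↔ h ∈ subrackB a y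

/-- The abelian set associated with `a`: elements `x` such that `∼ₓ` refines `∼ₐ`. -/
def assocAbelianSet {G : Type*} [Group G] (a : G) : Set G :=
  {x : G | ∀ g h : G, pseudoRel x g h → pseudoRel a g h}

/-- The relation `≈ₐ` whose equivalence classes form the hypothetical cycle form of `a`. -/
def cycleRel {G : Type*} [Group G] (a : G) (g h : G) : Prop :=
  pseudoRel a g h ∧
    ∀ x : G, x * a = a * x → (x * g * x⁻¹ = g ↔ x * h * x⁻¹ = h)

/-!
Write `O(a, g)` for the orbit of `g` under conjugation by `⟨a, g⟩`. The subrack generated by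
`{a, g}` consists of `⟨a, g⟩`-conjugates of `a` and of `g`, and from this one shows that in a
finite group `g ∼ₐ h` holds exactly when `h ∈ O(a, g)` and `g ∈ O(a, h)`. Consequently
`A_G(a)` is the set of `x` with `x g x⁻¹ ∈ O(a, g)` for all `g`, which is a subgroup containing
`a`. If `y` commutes with `a` then `O(a, y) = {y}`, so every element of `A_G(a)` commutes with
`y`; and `orderOf a ∣ |A_G(a)|` is Lagrange's theorem.
-/

section

variable {G : Type*} [Group G]

/-- `O(a, g)`: the orbit of `g` under conjugation by the subgroup generated by `a` and `g`. -/
def conjOrbit (a g : G) : Set G :=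
  {h | ∃ w ∈ Subgroup.closure {a, g}, w * g * w⁻¹ = h}

theorem conj_mem_of_mem_closure [Finite G] {S X : Set G}
    (hS : ∀ s ∈ S, ∀ t ∈ X, s * t * s⁻¹ ∈ X) {w : G} (hw : w ∈ Subgroup.closure S) :
    ∀ t ∈ X, w * t * w⁻¹ ∈ X := by
  rw [← Subgroup.mem_toSubmonoid, Subgroup.closure_toSubmonoid_of_finite] at hw
  induction hw using Submonoid.closure_induction with
  | mem s hs => exact hS s hs
  | one => simp
  | mul u v _ _ hu hv =>
    intro t ht
    simpa [mul_assoc] using hu _ (hv t ht)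

theorem subset_subrackClosure (T : Set G) : T ⊆ subrackClosure T :=
  fun _ ht => Set.mem_sInter.2 fun _ hS => hS.2 ht

theorem isSubrack_subrackClosure (T : Set G) : IsSubrack (subrackClosure T) :=
  fun a ha b hb => Set.mem_sInter.2 fun S hS =>
    hS.1 a (Set.mem_sInter.1 ha S hS) b (Set.mem_sInter.1 hb S hS)

theorem subrackClosure_subset {T S : Set G} (hS : IsSubrack S) (hTS : T ⊆ S) :
    subrackClosure T ⊆ S :=
  Set.sInter_subset_of_mem ⟨hS, hTS⟩

theorem subrackClosure_subset_conj_closure (T : Set G) :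
    subrackClosure T ⊆ {t | ∃ w ∈ Subgroup.closure T, ∃ x ∈ T, w * x * w⁻¹ = t} := by
  refine subrackClosure_subset ?_ fun x hx => ⟨1, one_mem _, x, hx, by group⟩
  rintro _ ⟨u, hu, x, hx, rfl⟩ _ ⟨v, hv, y, hy, rfl⟩
  have hconj : u * x * u⁻¹ ∈ Subgroup.closure T :=
    mul_mem (mul_mem hu (Subgroup.subset_closure hx)) (inv_mem hu)
  exact ⟨u * x * u⁻¹ * v, mul_mem hconj hv, y, hy, by group⟩

theorem subrackClosure_subset_closure (T : Set G) :
    subrackClosure T ⊆ Subgroup.closure T := by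
  rintro _ h
  obtain ⟨w, hw, x, hx, rfl⟩ := subrackClosure_subset_conj_closure T h
  exact mul_mem (mul_mem hw (Subgroup.subset_closure hx)) (inv_mem hw)

theorem conj_mem_subrackClosure [Finite G] {T : Set G} {w : G}
    (hw : w ∈ Subgroup.closure (subrackClosure T)) {t : G} (ht : t ∈ subrackClosure T) :
    w * t * w⁻¹ ∈ subrackClosure T :=
  conj_mem_of_mem_closure (isSubrack_subrackClosure T) hw t ht

theorem left_mem_closure_pair (a g : G) : a ∈ Subgroup.closure ({a, g} : Set G) :=
  Subgroup.subset_closure (Set.mem_insert a {g})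

theorem right_mem_closure_pair (a g : G) : g ∈ Subgroup.closure ({a, g} : Set G) :=
  Subgroup.subset_closure (Set.mem_insert_of_mem a rfl)

theorem closure_pair_le {a g h : G} (hh : h ∈ Subgroup.closure ({a, g} : Set G)) :
    Subgroup.closure ({a, h} : Set G) ≤ Subgroup.closure {a, g} := by
  rw [Subgroup.closure_le]
  rintro s (rfl | rfl)
  exacts [left_mem_closure_pair s g, hh]

theorem self_mem_conjOrbit (a g : G) : g ∈ conjOrbit a g :=
  ⟨1, one_mem _, by group⟩

theorem conj_mem_conjOrbit {a g w t : G} (hw : w ∈ Subgroup.closure ({a, g} : Set G))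
    (ht : t ∈ conjOrbit a g) : w * t * w⁻¹ ∈ conjOrbit a g := by
  obtain ⟨u, hu, rfl⟩ := ht
  exact ⟨w * u, mul_mem hw hu, by group⟩

theorem mem_closure_pair_of_mem_conjOrbit {a g h : G} (hh : h ∈ conjOrbit a g) :
    h ∈ Subgroup.closure ({a, g} : Set G) := by
  obtain ⟨w, hw, rfl⟩ := hh
  exact mul_mem (mul_mem hw (right_mem_closure_pair a g)) (inv_mem hw)

theorem conjOrbit_subset_of_mem {a g h : G} (hh : h ∈ conjOrbit a g) :
    conjOrbit a h ⊆ conjOrbit a g := by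
  rintro _ ⟨u, hu, rfl⟩
  obtain ⟨w, hw, rfl⟩ := hh
  have hu' := closure_pair_le (mem_closure_pair_of_mem_conjOrbit ⟨w, hw, rfl⟩) hu
  exact ⟨u * w, mul_mem hu' hw, by group⟩

theorem conj_eq_of_mem_conjOrbit {a y t : G} (hy : Commute a y) (ht : t ∈ conjOrbit a y) :
    t = y := by
  obtain ⟨w, hw, rfl⟩ := ht
  have hle : Subgroup.closure ({a, y} : Set G) ≤ Subgroup.centralizer {y} := by
    rw [Subgroup.closure_le]
    rintro s (rfl | rfl)
    exacts [Subgroup.mem_centralizer_singleton_iff.2 hy.eq,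
      Subgroup.mem_centralizer_singleton_iff.2 rfl]
  rw [Subgroup.mem_centralizer_singleton_iff.1 (hle hw)]
  group

theorem right_mem_subrackB (a g : G) : g ∈ subrackB a g :=
  ⟨subset_subrackClosure _ (Set.mem_insert_of_mem a rfl), 1, by group⟩

theorem mem_conjOrbit_of_pseudoRel {a g h : G} (hp : pseudoRel a g h) : h ∈ conjOrbit a g := by
  have hh : h ∈ subrackClosure {a, g} := ((hp g).1 (right_mem_subrackB a g)).1
  have hg : g ∈ subrackClosure {a, h} := ((hp h).2 (right_mem_subrackB a h)).1
  have hK : Subgroup.closure ({a, h} : Set G) = Subgroup.closure {a, g} :=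
    le_antisymm (closure_pair_le (subrackClosure_subset_closure _ hh))
      (closure_pair_le (subrackClosure_subset_closure _ hg))
  obtain ⟨u, hu, x, hx, hux⟩ := subrackClosure_subset_conj_closure _ hh
  obtain ⟨v, hv, y, hy, hvy⟩ := subrackClosure_subset_conj_closure _ hg
  rw [hK] at hv
  rcases hx with rfl | rfl
  · rcases hy with rfl | rfl
    · exact ⟨u * v⁻¹, mul_mem hu (inv_mem hv), by rw [← hux, ← hvy]; group⟩
    · exact ⟨v⁻¹, inv_mem hv, by rw [← hvy]; group⟩
  · exact ⟨u, hu, hux⟩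

theorem mem_subrackB_of_mem_conjOrbit [Finite G] {a g h y : G} (hg : g ∈ subrackB a y)
    (hh : h ∈ conjOrbit a g) : h ∈ subrackB a y := by
  obtain ⟨hgS, c, hc⟩ := hg
  obtain ⟨w, hw, rfl⟩ := hh
  have hle : Subgroup.closure ({a, g} : Set G) ≤ Subgroup.closure (subrackClosure {a, y}) := by
    rw [Subgroup.closure_le]
    rintro s (rfl | rfl)
    · exact Subgroup.subset_closure (subset_subrackClosure _ (Set.mem_insert s _))
    · exact Subgroup.subset_closure hgS
  exact ⟨conj_mem_subrackClosure (hle hw) hgS, w * c, by rw [← hc]; group⟩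

theorem pseudoRel_iff [Finite G] {a g h : G} :
    pseudoRel a g h ↔ h ∈ conjOrbit a g ∧ g ∈ conjOrbit a h :=
  ⟨fun hp => ⟨mem_conjOrbit_of_pseudoRel hp, mem_conjOrbit_of_pseudoRel fun y => (hp y).symm⟩,
    fun ⟨hh, hg⟩ _ =>
      ⟨(mem_subrackB_of_mem_conjOrbit · hh), (mem_subrackB_of_mem_conjOrbit · hg)⟩⟩

theorem pseudoRel_conj [Finite G] (x g : G) : pseudoRel x g (x * g * x⁻¹) :=
  pseudoRel_iff.2 ⟨⟨x, left_mem_closure_pair x g, rfl⟩,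
    ⟨x⁻¹, inv_mem (left_mem_closure_pair _ _), by group⟩⟩

section AssocAbelianSet

variable [Finite G]

theorem mem_assocAbelianSet_iff {a x : G} :
    x ∈ assocAbelianSet a ↔ ∀ g, x * g * x⁻¹ ∈ conjOrbit a g := by
  refine ⟨fun hx g => mem_conjOrbit_of_pseudoRel (hx _ _ (pseudoRel_conj x g)),
    fun hx g h hp => ?_⟩
  -- `conjOrbit a p` is stable under conjugation by `x` and by `p`, hence under `⟨x, p⟩`.
  have hstable : ∀ p q : G, q ∈ conjOrbit x p → q ∈ conjOrbit a p := by
    rintro p _ ⟨w, hw, rfl⟩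
    refine conj_mem_of_mem_closure ?_ hw p (self_mem_conjOrbit a p)
    rintro s (rfl | rfl) t ht
    exacts [conjOrbit_subset_of_mem ht (hx t), conj_mem_conjOrbit (right_mem_closure_pair a s) ht]
  obtain ⟨hh, hg⟩ := pseudoRel_iff.1 hp
  exact pseudoRel_iff.2 ⟨hstable g h hh, hstable h g hg⟩

def assocAbelianSubgroup (a : G) : Subgroup G where
  carrier := assocAbelianSet a
  one_mem' := mem_assocAbelianSet_iff.2 fun g => by simpa using self_mem_conjOrbit a g
  mul_mem' {x y} hx hy := mem_assocAbelianSet_iff.2 fun g => by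
    have hxy := conjOrbit_subset_of_mem (mem_assocAbelianSet_iff.1 hy g)
      (mem_assocAbelianSet_iff.1 hx (y * g * y⁻¹))
    simpa [mul_assoc] using hxy
  inv_mem' {x} hx := mem_assocAbelianSet_iff.2 fun g =>
    conj_mem_of_mem_closure (S := {x})
      (by rintro _ rfl t ht; exact conjOrbit_subset_of_mem ht (mem_assocAbelianSet_iff.1 hx t))
      (inv_mem (Subgroup.subset_closure rfl)) g (self_mem_conjOrbit a g)

theorem commute_of_mem_assocAbelianSet {a x y : G} (hx : x ∈ assocAbelianSet a)
    (hy : Commute a y) : Commute x y := by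
  have hconj : x * y * x⁻¹ = y := conj_eq_of_mem_conjOrbit hy (mem_assocAbelianSet_iff.1 hx y)
  calc x * y = x * y * x⁻¹ * x := by group
    _ = y * x := by rw [hconj]

end AssocAbelianSet

end

theorem assocAbelianSet_properties_general
    {G : Type*} [Group G] [Finite G] (a : G) :
    a ∈ assocAbelianSet a ∧
    (∀ x ∈ assocAbelianSet a, x ∈ Subgroup.centralizer ({a} : Set G) ∧
      ∀ y ∈ Subgroup.centralizer ({a} : Set G), x * y = y * x) ∧
    orderOf a ∣ Nat.card (assocAbelianSet a) := by
  have ha : a ∈ assocAbelianSet a := fun _ _ h => h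
  refine ⟨ha, fun x hx => ⟨?_, fun y hy => ?_⟩, ?_⟩
  · exact Subgroup.mem_centralizer_singleton_iff.2
      (commute_of_mem_assocAbelianSet hx (Commute.refl a)).eq
  · exact (commute_of_mem_assocAbelianSet hx (Subgroup.mem_centralizer_singleton_iff.1 hy).symm).eq
  · exact (assocAbelianSubgroup a).orderOf_dvd_natCard ha

theorem assocAbelianSet_properties
    {G : Type*} [Group G] [Finite G] (hZ : Subgroup.center G = ⊥) (a : G) :
    a ∈ assocAbelianSet a ∧
    (∀ x ∈ assocAbelianSet a, x ∈ Subgroup.centralizer ({a} : Set G) ∧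
      ∀ y ∈ Subgroup.centralizer ({a} : Set G), x * y = y * x) ∧
    orderOf a ∣ Nat.card (assocAbelianSet a) :=
  assocAbelianSet_properties_general a
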